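/- arXiv:1310.0481 — 3 statements merged into one kernel-verified Lean document; each statement's English description precedes it below -/
import Mathlib

section
/- Let F be a bipartite graph with parts A and B, let h ≥ 1, let δ := min{deg(a,B) : a ∈ A} and Δ := max{deg(b,A) : b ∈ B}, and suppose δ ≥ h. Then F contains at least (δ - h + 1)|A| / (hΔ + δ - h + 1) vertex-disjoint h-stars with centers in A and leaves in B. -/
/-- Zhao's star lemma, first part: a bipartite graph with all degrees from `A`
at least `δ ≥ h` and all degrees from `B` at most `Δ` contains at least
`(δ - h + 1)|A| / (hΔ + δ - h + 1)` vertex-disjoint `h`-stars with centers in `A`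
and leaves in `B`. -/
theorem zhao_stars_from_A
    {A B : Type} [Fintype A] [Fintype B] [DecidableEq B]
    (Adj : A → B → Prop) [∀ a b, Decidable (Adj a b)]
    (h δ Δ : ℕ) (hh : 1 ≤ h) (hδh : h ≤ δ)
    (hδ : ∀ a : A, δ ≤ (Finset.univ.filter fun b => Adj a b).card)
    (hΔ : ∀ b : B, (Finset.univ.filter fun a => Adj a b).card ≤ Δ) :
    ∃ (C : Finset A) (L : A → Finset B),
      (∀ c ∈ C, (L c).card = h ∧ ∀ b ∈ L c, Adj c b) ∧
      (∀ c ∈ C, ∀ c' ∈ C, c ≠ c' → Disjoint (L c) (L c')) ∧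
      ((δ : ℝ) - h + 1) * (Fintype.card A) / (h * Δ + δ - h + 1) ≤ (C.card : ℝ) := by
  classical
  let P : Finset A → Prop := fun C => ∃ L : A → Finset B,
    (∀ c ∈ C, (L c).card = h ∧ ∀ b ∈ L c, Adj c b) ∧
    (∀ c ∈ C, ∀ c' ∈ C, c ≠ c' → Disjoint (L c) (L c'))
  have hT : (Finset.univ.filter P).Nonempty := by
    refine ⟨∅, ?_⟩
    simp only [Finset.mem_filter, Finset.mem_univ, true_and]
    exact ⟨fun _ => ∅, by simp, by simp⟩
  obtain ⟨C, hCmem, hCmax⟩ := Finset.exists_max_image (Finset.univ.filter P) Finset.card hT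
  rw [Finset.mem_filter] at hCmem
  obtain ⟨-, L, hL1, hL2⟩ := hCmem
  refine ⟨C, L, hL1, hL2, ?_⟩
  set U : Finset B := C.biUnion L with hU
  have hUcard : U.card ≤ h * C.card := by
    calc U.card ≤ ∑ c ∈ C, (L c).card := Finset.card_biUnion_le
    _ = ∑ _c ∈ C, h := Finset.sum_congr rfl fun c hc => (hL1 c hc).1
    _ = h * C.card := by rw [Finset.sum_const, smul_eq_mul, mul_comm]
  -- maximality: no vertex outside C can start a new disjoint star
  have hmax : ∀ a ∉ C, ¬ (h ≤ (Finset.univ.filter fun b => Adj a b ∧ b ∉ U).card) := by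
    intro a ha hcard
    obtain ⟨S, hSsub, hScard⟩ := Finset.exists_subset_card_eq hcard
    have hSprop : ∀ b ∈ S, Adj a b ∧ b ∉ U := by
      intro b hb
      have := hSsub hb
      simpa using this
    have hCa : ∀ c, c ∈ C → c ≠ a := by
      intro c hc e
      rw [e] at hc
      exact ha hc
    have hPnew : P (insert a C) := by
      refine ⟨Function.update L a S, ?_, ?_⟩
      · intro c hc
        rcases Finset.mem_insert.mp hc with hca | hc
        · subst hca
          rw [Function.update_self]
          exact ⟨hScard, fun b hb => (hSprop b hb).1⟩
        · rw [Function.update_of_ne (hCa c hc)]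
          exact hL1 c hc
      · intro c hc c' hc' hne
        rcases Finset.mem_insert.mp hc with hca | hc2
        · subst hca
          rcases Finset.mem_insert.mp hc' with hca' | hc2'
          · exact absurd hca'.symm hne
          · rw [Function.update_self, Function.update_of_ne (hCa c' hc2')]
            exact Finset.disjoint_left.mpr fun b hb hb' =>
              (hSprop b hb).2 (Finset.mem_biUnion.mpr ⟨c', hc2', hb'⟩)
        · rcases Finset.mem_insert.mp hc' with hca' | hc2'
          · subst hca'
            rw [Function.update_self, Function.update_of_ne (hCa c hc2)]
            exact Finset.disjoint_right.mpr fun b hb hb' =>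
              (hSprop b hb).2 (Finset.mem_biUnion.mpr ⟨c, hc2, hb'⟩)
          · rw [Function.update_of_ne (hCa c hc2), Function.update_of_ne (hCa c' hc2')]
            exact hL2 c hc2 c' hc2' hne
    have hle := hCmax (insert a C) (Finset.mem_filter.mpr ⟨Finset.mem_univ _, hPnew⟩)
    rw [Finset.card_insert_of_notMem ha] at hle
    omega
  -- every a outside C has many neighbors inside U
  have hlow : ∀ a ∉ C, δ - h + 1 ≤ (U.filter fun b => Adj a b).card := by
    intro a ha
    have h1 := hδ a
    have h2 := hmax a ha
    have hsplit : (Finset.univ.filter fun b => Adj a b).card ≤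
        (U.filter fun b => Adj a b).card +
        (Finset.univ.filter fun b => Adj a b ∧ b ∉ U).card := by
      refine le_trans (Finset.card_le_card ?_) (Finset.card_union_le _ _)
      intro b hb
      simp only [Finset.mem_filter, Finset.mem_univ, true_and] at hb
      by_cases hbU : b ∈ U
      · exact Finset.mem_union_left _ (Finset.mem_filter.mpr ⟨hbU, hb⟩)
      · exact Finset.mem_union_right _ (by simp [hb, hbU])
    omega
  -- double counting edges from Cᶜ into U
  have hsum : ∑ a ∈ Cᶜ, (U.filter fun b => Adj a b).card ≤ Δ * (h * C.card) := by
    calc ∑ a ∈ Cᶜ, (U.filter fun b => Adj a b).card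
        = ∑ a ∈ Cᶜ, ∑ b ∈ U, if Adj a b then 1 else 0 :=
          Finset.sum_congr rfl fun a _ => Finset.card_filter _ _
      _ = ∑ b ∈ U, ∑ a ∈ Cᶜ, if Adj a b then 1 else 0 := Finset.sum_comm
      _ = ∑ b ∈ U, (Cᶜ.filter fun a => Adj a b).card :=
          Finset.sum_congr rfl fun b _ => (Finset.card_filter _ _).symm
      _ ≤ ∑ _b ∈ U, Δ := Finset.sum_le_sum fun b _ => le_trans
            (Finset.card_le_card (Finset.filter_subset_filter _ (Finset.subset_univ _))) (hΔ b)
      _ = Δ * U.card := by rw [Finset.sum_const, smul_eq_mul, mul_comm]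
      _ ≤ Δ * (h * C.card) := Nat.mul_le_mul_left _ hUcard
  have hlowsum : (δ - h + 1) * Cᶜ.card ≤ ∑ a ∈ Cᶜ, (U.filter fun b => Adj a b).card := by
    calc (δ - h + 1) * Cᶜ.card = ∑ _a ∈ Cᶜ, (δ - h + 1) := by
          rw [Finset.sum_const, smul_eq_mul, mul_comm]
      _ ≤ _ := Finset.sum_le_sum fun a haC => hlow a (by simpa using haC)
  have hcle : C.card ≤ Fintype.card A := Finset.card_le_univ C
  have hcompl : Cᶜ.card = Fintype.card A - C.card := by
    rw [Finset.card_compl]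
  have hkey : (δ - h + 1) * Fintype.card A ≤ (Δ * h + (δ - h + 1)) * C.card := by
    have e1 : Fintype.card A = (Fintype.card A - C.card) + C.card :=
      (Nat.sub_add_cancel hcle).symm
    calc (δ - h + 1) * Fintype.card A
        = (δ - h + 1) * (Fintype.card A - C.card) + (δ - h + 1) * C.card := by
          conv_lhs => rw [e1]
          rw [Nat.mul_add]
      _ ≤ Δ * (h * C.card) + (δ - h + 1) * C.card := by
          have := le_trans hlowsum hsum
          rw [hcompl] at this
          omega
      _ = (Δ * h + (δ - h + 1)) * C.card := by ring
  -- transfer to ℝ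
  have hdcast : ((δ - h + 1 : ℕ) : ℝ) = (δ : ℝ) - h + 1 := by
    rw [Nat.cast_add, Nat.cast_sub hδh, Nat.cast_one]
  have hDcast : (((Δ * h + (δ - h + 1)) : ℕ) : ℝ) = (h : ℝ) * Δ + δ - h + 1 := by
    push_cast [Nat.cast_sub hδh]
    ring
  have hDpos : (0 : ℝ) < (h : ℝ) * Δ + δ - h + 1 := by
    rw [← hDcast]
    have : 1 ≤ Δ * h + (δ - h + 1) := by omega
    exact_mod_cast Nat.lt_of_lt_of_le Nat.zero_lt_one this
  rw [div_le_iff₀ hDpos]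
  have hkeyR : ((δ : ℝ) - h + 1) * (Fintype.card A) ≤
      ((h : ℝ) * Δ + δ - h + 1) * C.card := by
    rw [← hdcast, ← hDcast]
    exact_mod_cast hkey
  linarith [hkeyR]
end

section
/- Let s be a positive integer, and write s = p² + q where p = ⌊√s⌋ and 0 ≤ q ≤ 2p. Suppose 1 ≤ q ≤ p. Then for all integers z with s - 2⌈√s⌉ + 3 ≤ z ≤ s - 1, we have ((z - (s - 2⌈√s⌉ + 1))/2)² ≤ z. -/
/-- The ceiling of the square root of a natural number. -/
noncomputable def csqrt (s : ℕ) : ℕ := ⌈Real.sqrt s⌉₊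

lemma csqrt_eq_of_lt (s : ℕ) (h1 : Nat.sqrt s ^ 2 < s) (h2 : s ≤ (Nat.sqrt s + 1) ^ 2) :
    csqrt s = Nat.sqrt s + 1 := by
  set p := Nat.sqrt s
  rw [csqrt, Nat.ceil_eq_iff (by omega)]
  constructor
  · have : ((p : ℝ)) < Real.sqrt s := by
      rw [show (p : ℝ) = Real.sqrt ((p^2 : ℕ) : ℝ) by
        push_cast; rw [Real.sqrt_sq (by positivity)]]
      exact Real.sqrt_lt_sqrt (by positivity) (by exact_mod_cast h1)
    simpa using this
  · have : Real.sqrt s ≤ Real.sqrt (((p+1)^2 : ℕ) : ℝ) :=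
      Real.sqrt_le_sqrt (by exact_mod_cast h2)
    calc Real.sqrt s ≤ _ := this
      _ = ((p+1 : ℕ) : ℝ) := by push_cast; rw [Real.sqrt_sq (by positivity)]
      _ = _ := by push_cast; ring

/-- If `s = p² + q` with `p = ⌊√s⌋` and `1 ≤ q ≤ p`, then for all integers `z`
with `s - 2⌈√s⌉ + 3 ≤ z ≤ s - 1` we have `((z - (s - 2⌈√s⌉ + 1))/2)² ≤ z`. -/
theorem square_bound_q_small (s : ℕ) (hs : 0 < s)
    (hq1 : 1 ≤ s - Nat.sqrt s ^ 2) (hq2 : s - Nat.sqrt s ^ 2 ≤ Nat.sqrt s) :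
    ∀ z : ℤ, (s : ℤ) - 2 * csqrt s + 3 ≤ z → z ≤ (s : ℤ) - 1 →
      (((z : ℝ) - ((s : ℝ) - 2 * csqrt s + 1)) / 2) ^ 2 ≤ (z : ℝ) := by
  intro z hz1 hz2
  have hple : Nat.sqrt s ^ 2 ≤ s := Nat.sqrt_le' s
  have h1 : Nat.sqrt s ^ 2 < s := by omega
  have h3 : s ≤ Nat.sqrt s ^ 2 + Nat.sqrt s := by omega
  have h2 : s ≤ (Nat.sqrt s + 1) ^ 2 := by nlinarith
  have hc : csqrt s = Nat.sqrt s + 1 := csqrt_eq_of_lt s h1 h2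
  simp only [hc] at hz1 hz2 ⊢
  set p := Nat.sqrt s with hp
  -- work over ℤ then cast
  have key : ((z : ℤ) - ((s : ℤ) - 2 * (p + 1) + 1)) ^ 2 ≤ 4 * z := by
    have hq1' : (p : ℤ)^2 + 1 ≤ s := by exact_mod_cast h1
    nlinarith [mul_nonneg (by omega : (0:ℤ) ≤ z - ((s:ℤ) - 2*(p+1) + 3))
      (by omega : (0:ℤ) ≤ (s:ℤ) - 1 - z)]
  have keyR : ((z : ℝ) - ((s : ℝ) - 2 * ((p:ℝ) + 1) + 1)) ^ 2 ≤ 4 * z := by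
    exact_mod_cast key
  push_cast
  nlinarith [keyR]
end

section
/- Let s ≥ 2 and let x, y be positive integers with x·y ≥ s. Then x + y ≥ 2⌈√s⌉ - c(s), where c(s) = 1 if 1 ≤ q ≤ p and c(s) = 0 otherwise (with s = p² + q, p = ⌊√s⌋, 0 ≤ q ≤ 2p). Moreover this bound is attained: there exist positive integers x, y with xy ≥ s and x + y = 2⌈√s⌉ - c(s). -/
/-- The function `c(s)`: with `s = p² + q`, `p = ⌊√s⌋`, `0 ≤ q ≤ 2p`,
`c(s) = 1` if `1 ≤ q ≤ p` and `c(s) = 0` otherwise. -/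
def cfun (s : ℕ) : ℕ :=
  if 1 ≤ s - Nat.sqrt s ^ 2 ∧ s - Nat.sqrt s ^ 2 ≤ Nat.sqrt s then 1 else 0

lemma csqrt_sq (p : ℕ) : csqrt (p ^ 2) = p := by
  unfold csqrt
  rw [show ((p ^ 2 : ℕ) : ℝ) = (p : ℝ) ^ 2 by push_cast; ring,
    Real.sqrt_sq (by positivity), Nat.ceil_natCast]

lemma csqrt_eq_succ (s : ℕ) (h : Nat.sqrt s ^ 2 < s) : csqrt s = Nat.sqrt s + 1 := by
  unfold csqrt
  have h2 : s < (Nat.sqrt s + 1) ^ 2 := by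
    have := Nat.lt_succ_sqrt s; nlinarith [this]
  rw [Nat.ceil_eq_iff (by omega)]
  constructor
  · simp only [Nat.add_sub_cancel]
    rw [show ((Nat.sqrt s : ℕ) : ℝ) = Real.sqrt ((Nat.sqrt s : ℝ) ^ 2) by
      rw [Real.sqrt_sq (by positivity)]]
    apply Real.sqrt_lt_sqrt (by positivity)
    have : ((Nat.sqrt s ^ 2 : ℕ) : ℝ) < (s : ℝ) := by exact_mod_cast h
    push_cast at this ⊢; linarith
  · rw [show ((Nat.sqrt s + 1 : ℕ) : ℝ) = Real.sqrt ((Nat.sqrt s + 1 : ℝ) ^ 2) by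
      rw [Real.sqrt_sq (by positivity)]; push_cast; ring]
    apply Real.sqrt_le_sqrt
    have : (s : ℝ) < ((Nat.sqrt s + 1 : ℕ) ^ 2 : ℕ) := by exact_mod_cast h2
    push_cast at this ⊢; nlinarith

/-- For `s ≥ 2`, positive integers `x, y` with `xy ≥ s` satisfy
`x + y ≥ 2⌈√s⌉ - c(s)`, and this bound is attained. -/
theorem sum_min_given_product (s : ℕ) (hs : 2 ≤ s) :
    (∀ x y : ℕ, 0 < x → 0 < y → s ≤ x * y →
      2 * (csqrt s : ℤ) - cfun s ≤ (x : ℤ) + y) ∧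
    ∃ x y : ℕ, 0 < x ∧ 0 < y ∧ s ≤ x * y ∧
      (x : ℤ) + y = 2 * (csqrt s : ℤ) - cfun s := by
  set p := Nat.sqrt s with hp
  have hple : p ^ 2 ≤ s := by have := Nat.sqrt_le' s; nlinarith [this]
  have hlt : s < (p + 1) ^ 2 := by have := Nat.lt_succ_sqrt s; nlinarith [this]
  have hp1 : 1 ≤ p := by
    rcases Nat.eq_zero_or_pos p with h | h
    · exfalso; rw [h] at hlt; omega
    · exact h
  by_cases h0 : s = p ^ 2
  · -- perfect square
    have hc : csqrt s = p := by rw [h0]; exact csqrt_sq p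
    have hcf : cfun s = 0 := by
      unfold cfun; rw [← hp, ← h0]; simp [Nat.sub_self, show s - s = 0 by omega]
    rw [hc, hcf]
    constructor
    · intro x y hx hy hxy
      have hxy' : (p : ℤ) ^ 2 ≤ (x : ℤ) * y := by
        have : (s : ℤ) ≤ (x : ℤ) * y := by exact_mod_cast hxy
        have : ((p ^ 2 : ℕ) : ℤ) ≤ (x : ℤ) * y := by rw [← h0] at *; exact_mod_cast hxy
        push_cast at this; linarith
      by_contra hcon
      push_neg at hcon
      have : (x : ℤ) + y ≤ 2 * p - 1 := by omega
      nlinarith [sq_nonneg ((x : ℤ) - y)]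
    · exact ⟨p, p, hp1, hp1, by nlinarith, by push_cast; ring⟩
  · have hq : p ^ 2 < s := lt_of_le_of_ne hple (fun h => h0 h.symm)
    have hc : csqrt s = p + 1 := csqrt_eq_succ s hq
    by_cases h1 : s - p ^ 2 ≤ p
    · -- 1 ≤ q ≤ p
      have hcf : cfun s = 1 := by unfold cfun; rw [← hp]; rw [if_pos ⟨by omega, h1⟩]
      rw [hc, hcf]
      constructor
      · intro x y hx hy hxy
        have hs' : (s : ℤ) ≤ (x : ℤ) * y := by exact_mod_cast hxy
        have hq' : ((p : ℤ)) ^ 2 < s := by exact_mod_cast hq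
        by_contra hcon
        push_neg at hcon
        have : (x : ℤ) + y ≤ 2 * p := by push_cast at hcon ⊢; omega
        nlinarith [sq_nonneg ((x : ℤ) - y)]
      · refine ⟨p, p + 1, hp1, by omega, ?_, by push_cast; ring⟩
        have h2 : s ≤ p ^ 2 + p := by omega
        nlinarith
    · -- p < q
      have hcf : cfun s = 0 := by unfold cfun; rw [← hp]; rw [if_neg (by omega)]
      rw [hc, hcf]
      constructor
      · intro x y hx hy hxy
        have hs' : (s : ℤ) ≤ (x : ℤ) * y := by exact_mod_cast hxy
        have hq' : ((p : ℤ)) ^ 2 + p < s := by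
          have : p ^ 2 + p < s := by omega
          exact_mod_cast this
        by_contra hcon
        push_neg at hcon
        have : (x : ℤ) + y ≤ 2 * p + 1 := by push_cast at hcon ⊢; omega
        nlinarith [sq_nonneg ((x : ℤ) - y)]
      · refine ⟨p + 1, p + 1, by omega, by omega, by nlinarith, by push_cast; ring⟩
end
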